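/- arXiv:2604.14503 — 5 statements merged into one kernel-verified Lean document; each statement's English description precedes it below -/
import Mathlib

section
/- Let g : ℝⁿ → ℝ ∪ {+∞} be proper, lsc and convex, and γ > 0. Then for any x₁, x₂ ∈ ℝⁿ, (g(prox_{γg}(x₁)) - g(prox_{γg}(x₂)))/‖x₁ - x₂‖ ≤ (1/(2γ))‖x₁ - x₂‖ + (1/γ)‖x₁ - prox_{γg}(x₁)‖, provided x₁ ≠ x₂. In particular g ∘ prox_{γg} is locally Lipschitz (strictly continuous) on ℝⁿ. -/
open scoped RealInnerProductSpace
open Filter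

noncomputable section

abbrev E (n : ℕ) := EuclideanSpace ℝ (Fin n)

/-- `g` is proper, lower semicontinuous and convex (extended-real-valued). -/
def ProperConvexLsc {n : ℕ} (g : E n → EReal) : Prop :=
  (∃ x, g x ≠ ⊤) ∧ (∀ x, g x ≠ ⊥) ∧ LowerSemicontinuous g ∧
    ∀ x y : E n, ∀ a b : ℝ, 0 ≤ a → 0 ≤ b → a + b = 1 →
      g (a • x + b • y) ≤ (a : ℝ) * g x + (b : ℝ) * g y

/-- `P` is the proximal operator of `g` with stepsize `γ`. -/
def IsProx {n : ℕ} (g : E n → EReal) (γ : ℝ) (P : E n → E n) : Prop :=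
  ∀ z u, g (P z) + (((1 / (2 * γ)) * ‖P z - z‖ ^ 2 : ℝ) : EReal)
        ≤ g u + (((1 / (2 * γ)) * ‖u - z‖ ^ 2 : ℝ) : EReal)

/-!
The first-order optimality condition of the proximal problem, obtained by moving the minimiser
`P x₁` a short way towards `P x₂` inside the (convex) domain of `g`, gives the subgradient
inequality `g (P x₁) ≤ g (P x₂) + γ⁻¹ ⟪P x₁ - x₁, P x₂ - P x₁⟫`. Adding it to its mirror image
shows that `P` is firmly nonexpansive, and Cauchy–Schwarz then bounds `g (P x₁) - g (P x₂)` by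
`γ⁻¹ ‖x₁ - P x₁‖ ‖x₁ - x₂‖`. Since `x ↦ ‖x - P x‖` is continuous, it is bounded near every
point, which makes `g ∘ P` locally Lipschitz.
-/

open Topology Set

section InnerProductSpace

variable {F : Type*} [NormedAddCommGroup F] [InnerProductSpace ℝ F]

theorem ConvexOn.le_add_inner_of_forall_le {S : Set F} {φ : F → ℝ} (hφ : ConvexOn ℝ S φ)
    {c : ℝ} {z p u : F} (hp : p ∈ S) (hu : u ∈ S)
    (hmin : ∀ v ∈ S, φ p + c * ‖p - z‖ ^ 2 ≤ φ v + c * ‖v - z‖ ^ 2) :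
    φ p ≤ φ u + 2 * c * ⟪p - z, u - p⟫ := by
  set b := φ u + 2 * c * ⟪p - z, u - p⟫
  have hsegment : ∀ t ∈ Ioc (0 : ℝ) 1, φ p ≤ b + t * (c * ‖u - p‖ ^ 2) := by
    rintro t ⟨ht0, ht1⟩
    have hmem : (1 - t) • p + t • u ∈ S := hφ.1 hp hu (by linarith) ht0.le (by ring)
    have hconv := hφ.2 hp hu (by linarith : 0 ≤ 1 - t) ht0.le (by ring)
    rw [smul_eq_mul, smul_eq_mul] at hconv
    have hexp : ‖(1 - t) • p + t • u - z‖ ^ 2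
        = ‖p - z‖ ^ 2 + 2 * t * ⟪p - z, u - p⟫ + t ^ 2 * ‖u - p‖ ^ 2 := by
      rw [show (1 - t) • p + t • u - z = (p - z) + t • (u - p) by module, norm_add_sq_real,
        real_inner_smul_right, norm_smul, mul_pow, Real.norm_eq_abs, sq_abs]
      ring
    have hle := hmin _ hmem
    rw [hexp] at hle
    refine le_of_mul_le_mul_left ?_ ht0
    linear_combination hle + hconv
  have hlim : Tendsto (fun t : ℝ => b + t * (c * ‖u - p‖ ^ 2)) (𝓝[>] 0) (𝓝 b) := by
    have hcont : Continuous fun t : ℝ => b + t * (c * ‖u - p‖ ^ 2) := by fun_prop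
    simpa using (hcont.tendsto 0).mono_left nhdsWithin_le_nhds
  exact ge_of_tendsto hlim (eventually_of_mem (Ioc_mem_nhdsGT zero_lt_one) hsegment)

theorem norm_sub_le_of_sq_le_inner {a b p q : F} (h : ‖p - q‖ ^ 2 ≤ ⟪a - b, p - q⟫) :
    ‖p - q‖ ≤ ‖a - b‖ := by
  have hcs := real_inner_le_norm (a - b) (p - q)
  nlinarith [norm_nonneg (p - q), norm_nonneg (a - b)]

end InnerProductSpace

variable {n : ℕ} {g : E n → EReal} {γ : ℝ} {P : E n → E n}

theorem ProperConvexLsc.convexOn_toReal (hg : ProperConvexLsc g) :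
    ConvexOn ℝ {x | g x ≠ ⊤} fun x => (g x).toReal := by
  obtain ⟨-, hbot, -, hconv⟩ := hg
  have key : ∀ ⦃x⦄, g x ≠ ⊤ → ∀ ⦃y⦄, g y ≠ ⊤ → ∀ ⦃a b : ℝ⦄, 0 ≤ a → 0 ≤ b → a + b = 1 →
      g (a • x + b • y) ≤ ((a * (g x).toReal + b * (g y).toReal : ℝ) : EReal) := by
    intro x hx y hy a b ha hb hab
    have h := hconv x y a b ha hb hab
    rwa [← EReal.coe_toReal hx (hbot x), ← EReal.coe_toReal hy (hbot y), ← EReal.coe_mul,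
      ← EReal.coe_mul, ← EReal.coe_add] at h
  refine ⟨fun x hx y hy a b ha hb hab => ?_, fun x hx y hy a b ha hb hab => ?_⟩
  · exact ne_top_of_le_ne_top (EReal.coe_ne_top _) (key hx hy ha hb hab)
  · exact EReal.toReal_le_toReal (key hx hy ha hb hab) (hbot _) (EReal.coe_ne_top _)

namespace IsProx

theorem apply_ne_top (hg : ProperConvexLsc g) (hP : IsProx g γ P) (z : E n) : g (P z) ≠ ⊤ := by
  obtain ⟨x₀, hx₀⟩ := hg.1
  intro htop
  have h := hP z x₀
  rw [htop, EReal.top_add_of_ne_bot (EReal.coe_ne_bot _), top_le_iff] at h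
  exact EReal.add_lt_top hx₀ (EReal.coe_ne_top _) |>.ne h

theorem toReal_add_le (hg : ProperConvexLsc g) (hP : IsProx g γ P) (z : E n) {u : E n}
    (hu : g u ≠ ⊤) :
    (g (P z)).toReal + 1 / (2 * γ) * ‖P z - z‖ ^ 2 ≤ (g u).toReal + 1 / (2 * γ) * ‖u - z‖ ^ 2 := by
  have h := hP z u
  rw [← EReal.coe_toReal (hP.apply_ne_top hg z) (hg.2.1 _), ← EReal.coe_toReal hu (hg.2.1 u),
    ← EReal.coe_add, ← EReal.coe_add] at h
  exact_mod_cast h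

theorem toReal_le_add_inner (hg : ProperConvexLsc g) (hP : IsProx g γ P) (x₁ x₂ : E n) :
    (g (P x₁)).toReal ≤ (g (P x₂)).toReal + γ⁻¹ * ⟪P x₁ - x₁, P x₂ - P x₁⟫ := by
  have h := hg.convexOn_toReal.le_add_inner_of_forall_le (hP.apply_ne_top hg x₁)
    (hP.apply_ne_top hg x₂) fun v hv => hP.toReal_add_le hg x₁ hv
  rwa [show 2 * (1 / (2 * γ)) = γ⁻¹ by ring] at h

theorem sq_norm_sub_le_inner (hγ : 0 < γ) (hg : ProperConvexLsc g) (hP : IsProx g γ P)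
    (x₁ x₂ : E n) : ‖P x₁ - P x₂‖ ^ 2 ≤ ⟪x₁ - x₂, P x₁ - P x₂⟫ := by
  have h₁₂ := hP.toReal_le_add_inner hg x₁ x₂
  have h₂₁ := hP.toReal_le_add_inner hg x₂ x₁
  have hsum : ⟪P x₁ - x₁, P x₂ - P x₁⟫ + ⟪P x₂ - x₂, P x₁ - P x₂⟫
      = ⟪x₁ - x₂, P x₁ - P x₂⟫ - ‖P x₁ - P x₂‖ ^ 2 := by
    rw [← real_inner_self_eq_norm_sq, ← neg_sub (P x₁) (P x₂), inner_neg_right, neg_add_eq_sub,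
      ← inner_sub_left, ← inner_sub_left]
    congr 1
    abel
  have hnonneg : 0 ≤ γ⁻¹ * (⟪x₁ - x₂, P x₁ - P x₂⟫ - ‖P x₁ - P x₂‖ ^ 2) := by
    rw [← hsum]
    linarith
  exact sub_nonneg.1 (nonneg_of_mul_nonneg_right hnonneg (inv_pos.2 hγ))

theorem lipschitzWith_one (hγ : 0 < γ) (hg : ProperConvexLsc g) (hP : IsProx g γ P) :
    LipschitzWith 1 P :=
  LipschitzWith.of_dist_le_mul fun x₁ x₂ => by
    simpa [dist_eq_norm] using norm_sub_le_of_sq_le_inner (hP.sq_norm_sub_le_inner hγ hg x₁ x₂)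

theorem toReal_sub_le (hγ : 0 < γ) (hg : ProperConvexLsc g) (hP : IsProx g γ P) (x₁ x₂ : E n) :
    (g (P x₁)).toReal - (g (P x₂)).toReal ≤ γ⁻¹ * ‖x₁ - P x₁‖ * ‖x₁ - x₂‖ := by
  have hnonexp : ‖P x₂ - P x₁‖ ≤ ‖x₁ - x₂‖ := by
    simpa [dist_eq_norm, norm_sub_rev (P x₂)] using (hP.lipschitzWith_one hγ hg).dist_le_mul x₁ x₂
  calc (g (P x₁)).toReal - (g (P x₂)).toReal ≤ γ⁻¹ * ⟪P x₁ - x₁, P x₂ - P x₁⟫ := by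
        linarith [hP.toReal_le_add_inner hg x₁ x₂]
    _ ≤ γ⁻¹ * (‖P x₁ - x₁‖ * ‖P x₂ - P x₁‖) := by
        gcongr
        exact real_inner_le_norm _ _
    _ ≤ γ⁻¹ * (‖x₁ - P x₁‖ * ‖x₁ - x₂‖) := by
        rw [norm_sub_rev (P x₁)]
        gcongr
    _ = γ⁻¹ * ‖x₁ - P x₁‖ * ‖x₁ - x₂‖ := by ring

theorem lipschitzOnWith (hγ : 0 < γ) (hg : ProperConvexLsc g) (hP : IsProx g γ P) (R : ℝ) :
    LipschitzOnWith (R / γ).toNNReal (fun x => (g (P x)).toReal) {x | ‖x - P x‖ ≤ R} := by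
  refine LipschitzOnWith.of_le_add_mul' _ fun x hx y _ => ?_
  have h := hP.toReal_sub_le hγ hg x y
  have hR : γ⁻¹ * ‖x - P x‖ ≤ R / γ := by
    rw [div_eq_inv_mul]
    exact mul_le_mul_of_nonneg_left hx (inv_nonneg.2 hγ.le)
  rw [dist_eq_norm]
  linarith [mul_le_mul_of_nonneg_right hR (norm_nonneg (x - y))]

end IsProx

/-- Difference-quotient bound for `g ∘ prox_{γg}`, and local Lipschitz continuity. -/
theorem g_comp_prox_quotient_bound {n : ℕ} (g : E n → EReal) (γ : ℝ) (hγ : 0 < γ)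
    (hg : ProperConvexLsc g) (P : E n → E n) (hP : IsProx g γ P) :
    (∀ x₁ x₂ : E n, x₁ ≠ x₂ →
      ((g (P x₁)).toReal - (g (P x₂)).toReal) / ‖x₁ - x₂‖ ≤
        (1 / (2 * γ)) * ‖x₁ - x₂‖ + (1 / γ) * ‖x₁ - P x₁‖) ∧
      LocallyLipschitz (fun x => (g (P x)).toReal) := by
  refine ⟨fun x₁ x₂ hne => ?_, fun x => ?_⟩
  · rw [div_le_iff₀ (norm_pos_iff.2 (sub_ne_zero.2 hne))]
    have h := hP.toReal_sub_le hγ hg x₁ x₂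
    have hquad : 0 ≤ 1 / (2 * γ) * ‖x₁ - x₂‖ * ‖x₁ - x₂‖ := by positivity
    rw [one_div γ]
    linarith
  · have hcont : Continuous fun u => ‖u - P u‖ :=
      (continuous_id.sub (hP.lipschitzWith_one hγ hg).continuous).norm
    exact ⟨_, _, hcont.continuousAt.preimage_mem_nhds (Iic_mem_nhds (lt_add_one ‖x - P x‖)),
      hP.lipschitzOnWith hγ hg _⟩
end
end

section
/- Let g : ℝⁿ → ℝ ∪ {+∞} be proper, lsc, convex, and γ > 0. The pointwise Lipschitz modulus of g ∘ prox_{γg} at any x ∈ ℝⁿ satisfies lip(g ∘ prox_{γg})(x) ≤ (1/γ)‖x - prox_{γg}(x)‖. -/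
open scoped RealInnerProductSpace
open Filter

noncomputable section

/-- Pointwise Lipschitz modulus: `lip h(x) = limsup_{y,z → x, y ≠ z} |h y - h z|/‖y - z‖`. -/
def lipMod {n : ℕ} (h : E n → ℝ) (x : E n) : ENNReal :=
  Filter.limsup (fun p : E n × E n => ENNReal.ofReal (|h p.1 - h p.2| / ‖p.1 - p.2‖))
    ((nhds (x, x)) ⊓ Filter.principal {p : E n × E n | p.1 ≠ p.2})

section aux
variable {n : ℕ} {g : E n → EReal} {γ : ℝ} (hγ : 0 < γ) (hg : ProperConvexLsc g)
  {P : E n → E n} (hP : IsProx g γ P)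

include hγ hg hP in
lemma finite_gP (y : E n) : ∃ r : ℝ, g (P y) = r := by
  obtain ⟨u, hu⟩ := hg.1
  have h := hP y u
  have hbot := hg.2.1 (P y)
  have h2 : g (P y) + (((1 / (2 * γ)) * ‖P y - y‖ ^ 2 : ℝ) : EReal) < ⊤ :=
    lt_of_le_of_lt h (EReal.add_lt_top hu (EReal.coe_ne_top _))
  have htop : g (P y) ≠ ⊤ := by
    intro htop
    rw [htop, EReal.top_add_of_ne_bot (EReal.coe_ne_bot _)] at h2
    exact lt_irrefl _ h2
  exact ⟨(g (P y)).toReal, (EReal.coe_toReal htop hbot).symm⟩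

include hγ hg hP in
lemma subgrad (y u : E n) (r s : ℝ) (hr : g (P y) = r) (hs : g u = s) :
    r + (1/γ) * ⟪y - P y, u - P y⟫ ≤ s := by
  have hγ0 : γ ≠ 0 := ne_of_gt hγ
  have hC : (0:ℝ) ≤ (1 / (2 * γ)) * ‖u - P y‖ ^ 2 := by positivity
  have key : ∀ t : ℝ, 0 < t → t ≤ 1 →
      r + (1/γ) * ⟪y - P y, u - P y⟫ ≤ s + t * ((1 / (2 * γ)) * ‖u - P y‖ ^ 2) := by
    intro t ht ht1
    set w : E n := (1 - t) • P y + t • u with hw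
    have hconv := hg.2.2.2 (P y) u (1 - t) t (by linarith) ht.le (by ring)
    rw [hr, hs, ← EReal.coe_mul, ← EReal.coe_mul, ← EReal.coe_add] at hconv
    have hprox := hP y w
    rw [hr] at hprox
    have hle : ((r : EReal) + (((1 / (2 * γ)) * ‖P y - y‖ ^ 2 : ℝ) : EReal)) ≤
        ((((1 - t) * r + t * s : ℝ) : EReal) + (((1 / (2 * γ)) * ‖w - y‖ ^ 2 : ℝ) : EReal)) :=
      le_trans hprox (add_le_add_left hconv _)
    rw [← EReal.coe_add, ← EReal.coe_add, EReal.coe_le_coe_iff] at hle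
    have hwy : w - y = (P y - y) + t • (u - P y) := by rw [hw]; module
    have hexp : ‖w - y‖^2 = ‖P y - y‖^2 + 2 * (t * ⟪P y - y, u - P y⟫) + t^2 * ‖u - P y‖^2 := by
      rw [hwy, norm_add_sq_real, real_inner_smul_right, norm_smul, Real.norm_eq_abs,
        mul_pow, sq_abs]
    rw [hexp] at hle
    have hip : ⟪y - P y, u - P y⟫ = -⟪P y - y, u - P y⟫ := by
      rw [show y - P y = -(P y - y) by abel, inner_neg_left]
    rw [hip]
    have hc2 : (1:ℝ)/γ = 2 * (1/(2*γ)) := by field_simp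
    have h3 : t * (r + (1/γ) * -⟪P y - y, u - P y⟫) ≤
        t * (s + t * ((1 / (2 * γ)) * ‖u - P y‖ ^ 2)) := by
      rw [hc2]; nlinarith [hle]
    exact le_of_mul_le_mul_left h3 ht
  refine le_of_forall_pos_le_add fun ε hε => ?_
  set C := (1 / (2 * γ)) * ‖u - P y‖ ^ 2 with hCdef
  have hC1 : (0:ℝ) < C + 1 := by linarith
  set t := min 1 (ε / (C + 1)) with htdef
  have ht : 0 < t := lt_min one_pos (div_pos hε hC1)
  have h1 := key t ht (min_le_left _ _)
  have h5 : t ≤ ε / (C + 1) := min_le_right _ _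
  have h6 : t * (C + 1) ≤ ε := by
    rw [← le_div_iff₀ hC1]; exact h5
  have h7 : t * C ≤ ε := by nlinarith
  linarith

include hγ hg hP in
lemma nonexp (y z : E n) : ‖P y - P z‖ ≤ ‖y - z‖ := by
  obtain ⟨ry, hry⟩ := finite_gP hγ hg hP y
  obtain ⟨rz, hrz⟩ := finite_gP hγ hg hP z
  have h1 := subgrad hγ hg hP y (P z) ry rz hry hrz
  have h2 := subgrad hγ hg hP z (P y) rz ry hrz hry
  have hγ' : (0:ℝ) < 1/γ := by positivity
  have hsum : ⟪y - P y, P z - P y⟫ + ⟪z - P z, P y - P z⟫ ≤ 0 := by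
    have := add_le_add h1 h2
    nlinarith
  have e1 : ⟪y - P y, P z - P y⟫ = -⟪y - P y, P y - P z⟫ := by
    rw [show P z - P y = -(P y - P z) by abel, inner_neg_right]
  have e2 : ⟪y - z, P y - P z⟫
      = ⟪y - P y, P y - P z⟫ - ⟪z - P z, P y - P z⟫ + ‖P y - P z‖^2 := by
    rw [show y - z = ((y - P y) - (z - P z)) + (P y - P z) by abel, inner_add_left,
      inner_sub_left, real_inner_self_eq_norm_sq]
  have key : ‖P y - P z‖^2 ≤ ⟪y - z, P y - P z⟫ := by rw [e2]; rw [e1] at hsum; linarith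
  have hcs := real_inner_le_norm (y - z) (P y - P z)
  nlinarith [norm_nonneg (P y - P z), norm_nonneg (y - z)]
end aux

section aux2
variable {n : ℕ} {g : E n → EReal} {γ : ℝ} (hγ : 0 < γ) (hg : ProperConvexLsc g)
  {P : E n → E n} (hP : IsProx g γ P)

include hγ hg hP in
lemma keybound (y z : E n) : |(g (P y)).toReal - (g (P z)).toReal| ≤
    (1/γ) * max ‖y - P y‖ ‖z - P z‖ * ‖y - z‖ := by
  obtain ⟨ry, hry⟩ := finite_gP hγ hg hP y
  obtain ⟨rz, hrz⟩ := finite_gP hγ hg hP z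
  have h1 := subgrad hγ hg hP y (P z) ry rz hry hrz
  have h2 := subgrad hγ hg hP z (P y) rz ry hrz hry
  have hty : (g (P y)).toReal = ry := by rw [hry]; exact EReal.toReal_coe ry
  have htz : (g (P z)).toReal = rz := by rw [hrz]; exact EReal.toReal_coe rz
  rw [hty, htz]
  have hγ' : (0:ℝ) < 1/γ := by positivity
  have hne := nonexp hγ hg hP y z
  have hne' : ‖P z - P y‖ ≤ ‖y - z‖ := by
    rw [show P z - P y = -(P y - P z) by abel, norm_neg]; exact hne
  have cs1 := abs_real_inner_le_norm (y - P y) (P z - P y)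
  have cs2 := abs_real_inner_le_norm (z - P z) (P y - P z)
  have hmax1 : ‖y - P y‖ ≤ max ‖y - P y‖ ‖z - P z‖ := le_max_left _ _
  have hmax2 : ‖z - P z‖ ≤ max ‖y - P y‖ ‖z - P z‖ := le_max_right _ _
  rw [abs_le]
  rw [abs_le] at cs1 cs2
  constructor
  · have b1 : -(‖z - P z‖ * ‖P y - P z‖) ≤ ⟪z - P z, P y - P z⟫ := cs2.1
    have b2 : ‖z - P z‖ * ‖P y - P z‖ ≤ max ‖y - P y‖ ‖z - P z‖ * ‖y - z‖ :=
      mul_le_mul hmax2 hne (norm_nonneg _) (le_trans (norm_nonneg _) hmax1)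
    have lb : -(max ‖y - P y‖ ‖z - P z‖ * ‖y - z‖) ≤ ⟪z - P z, P y - P z⟫ :=
      le_trans (neg_le_neg b2) b1
    have hm := mul_le_mul_of_nonneg_left lb hγ'.le
    linarith
  · have b1 : -(‖y - P y‖ * ‖P z - P y‖) ≤ ⟪y - P y, P z - P y⟫ := cs1.1
    have b2 : ‖y - P y‖ * ‖P z - P y‖ ≤ max ‖y - P y‖ ‖z - P z‖ * ‖y - z‖ :=
      mul_le_mul hmax1 hne' (norm_nonneg _) (le_trans (norm_nonneg _) hmax1)
    have lb : -(max ‖y - P y‖ ‖z - P z‖ * ‖y - z‖) ≤ ⟪y - P y, P z - P y⟫ :=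
      le_trans (neg_le_neg b2) b1
    have hm := mul_le_mul_of_nonneg_left lb hγ'.le
    linarith
end aux2


/-- `lip (g ∘ prox_{γg})(x) ≤ (1/γ)‖x - prox_{γg}(x)‖`. -/
theorem lip_g_comp_prox {n : ℕ} (g : E n → EReal) (γ : ℝ) (hγ : 0 < γ)
    (hg : ProperConvexLsc g) (P : E n → E n) (hP : IsProx g γ P) (x : E n) :
    lipMod (fun y => (g (P y)).toReal) x ≤ ENNReal.ofReal ((1 / γ) * ‖x - P x‖) := by
  set l := (nhds (x, x)) ⊓ Filter.principal {p : E n × E n | p.1 ≠ p.2} with hl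
  set G : E n × E n → ENNReal := fun p =>
    ENNReal.ofReal ((1/γ) * max ‖p.1 - P p.1‖ ‖p.2 - P p.2‖) with hG
  have hPlip : LipschitzWith 1 P := by
    refine LipschitzWith.of_dist_le_mul fun a b => ?_
    rw [dist_eq_norm, dist_eq_norm, NNReal.coe_one, one_mul]
    exact nonexp hγ hg hP a b
  have hGc : Continuous G := by
    refine ENNReal.continuous_ofReal.comp (continuous_const.mul ?_)
    exact ((continuous_fst.sub (hPlip.continuous.comp continuous_fst)).norm.max
      ((continuous_snd.sub (hPlip.continuous.comp continuous_snd)).norm))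
  have hGlim : Tendsto G l (nhds (ENNReal.ofReal ((1 / γ) * ‖x - P x‖))) := by
    have h1 : Tendsto G (nhds (x, x)) (nhds (G (x, x))) := hGc.continuousAt
    have h2 : G (x, x) = ENNReal.ofReal ((1 / γ) * ‖x - P x‖) := by
      simp [hG, max_self]
    rw [h2] at h1
    exact h1.mono_left inf_le_left
  have hFG : ∀ᶠ p in l, (fun p : E n × E n =>
      ENNReal.ofReal (|(g (P p.1)).toReal - (g (P p.2)).toReal| / ‖p.1 - p.2‖)) p ≤ G p := by
    rw [hl]
    filter_upwards [eventually_inf_principal.mpr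
      (Filter.Eventually.of_forall fun p (hp : p.1 ≠ p.2) => hp)] with p hp
    refine ENNReal.ofReal_le_ofReal ?_
    have hnorm : (0:ℝ) < ‖p.1 - p.2‖ := by
      rw [norm_pos_iff]; exact sub_ne_zero.mpr hp
    rw [div_le_iff₀ hnorm]
    exact keybound hγ hg hP p.1 p.2
  refine le_of_forall_gt_imp_ge_of_dense fun b hb => ?_
  have hev : ∀ᶠ p in l, (fun p : E n × E n =>
      ENNReal.ofReal (|(g (P p.1)).toReal - (g (P p.2)).toReal| / ‖p.1 - p.2‖)) p ≤ b := by
    filter_upwards [hFG, hGlim.eventually (eventually_le_nhds hb)] with p h1 h2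
    exact le_trans h1 h2
  exact limsup_le_of_le (by isBoundedDefault) hev
end
end

section
/- Let f : ℝⁿ → ℝ be L_f-Lipschitz smooth, g : ℝⁿ → ℝ ∪ {+∞} proper, lsc and convex, φ = f + g, γ > 0, and ψ_γ = φ ∘ prox_{γg}. For any x ∈ ℝⁿ, with x̂ = prox_{γg}(x), it holds that ψ_γ(x̂ - γ∇f(x̂)) - ψ_γ(x) ≤ -γ(2 - γL_f)/2 · ‖R_γ(x̂)‖², where R_γ(y) = (y - prox_{γg}(y - γ∇f(y)))/γ. -/
open scoped RealInnerProductSpace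
open Filter InnerProductSpace

noncomputable section

/-- `f` is `L`-Lipschitz smooth with gradient `f'`. -/
def LipSmooth {n : ℕ} (f : E n → ℝ) (f' : E n → E n) (L : ℝ) : Prop :=
  (∀ x, HasGradientAt f (f' x) x) ∧ LipschitzWith L.toNNReal f'


lemma descent_lemma {n : ℕ} (f : E n → ℝ) (f' : E n → E n) (L : ℝ) (hL : 0 ≤ L)
    (hd : ∀ x, HasGradientAt f (f' x) x) (hlip : LipschitzWith L.toNNReal f')
    (x v : E n) : f (x + v) ≤ f x + ⟪f' x, v⟫ + L / 2 * ‖v‖ ^ 2 := by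
  have hderiv : ∀ t : ℝ, HasDerivAt (fun t : ℝ => f (x + t • v)) ⟪f' (x + t • v), v⟫ t := by
    intro t
    have h1 : HasDerivAt (fun t : ℝ => x + t • v) v t := by
      simpa using ((hasDerivAt_id t).smul_const v).const_add x
    have h2 : HasFDerivAt f (toDual ℝ (E n) (f' (x + t • v))) (x + t • v) := hd _
    have := h2.comp_hasDerivAt t h1
    simpa [toDual_apply_apply, Function.comp_def] using this
  have hcont : Continuous fun t : ℝ => ⟪f' (x + t • v), v⟫ := by
    exact (hlip.continuous.comp (by continuity)).inner continuous_const
  have key : f (x + v) - f x = ∫ t in (0:ℝ)..1, ⟪f' (x + t • v), v⟫ := by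
    rw [intervalIntegral.integral_eq_sub_of_hasDerivAt (fun t _ => hderiv t)
      (hcont.intervalIntegrable 0 1)]
    simp
  have hbound : ∀ t ∈ Set.Icc (0:ℝ) 1, ⟪f' (x + t • v), v⟫ ≤ ⟪f' x, v⟫ + L * t * ‖v‖ ^ 2 := by
    intro t ht
    have h1 : ⟪f' (x + t • v) - f' x, v⟫ ≤ ‖f' (x + t • v) - f' x‖ * ‖v‖ :=
      real_inner_le_norm _ _
    have h2 : ‖f' (x + t • v) - f' x‖ ≤ L * (t * ‖v‖) := by
      have := hlip.dist_le_mul (x + t • v) x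
      simp only [dist_eq_norm, add_sub_cancel_left] at this
      calc ‖f' (x + t • v) - f' x‖ ≤ L.toNNReal * ‖t • v‖ := this
        _ = L * (|t| * ‖v‖) := by rw [norm_smul, Real.coe_toNNReal _ hL]; simp [Real.norm_eq_abs]
        _ = L * (t * ‖v‖) := by rw [abs_of_nonneg ht.1]
    have h3 : ⟪f' (x + t • v) - f' x, v⟫ ≤ L * t * ‖v‖ ^ 2 := by
      nlinarith [norm_nonneg v, h1, h2]
    rw [inner_sub_left] at h3
    linarith
  have hint : (∫ t in (0:ℝ)..1, ⟪f' (x + t • v), v⟫) ≤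
      ∫ t in (0:ℝ)..1, (⟪f' x, v⟫ + L * t * ‖v‖ ^ 2) := by
    apply intervalIntegral.integral_mono_on (by norm_num) (hcont.intervalIntegrable 0 1)
      ((by continuity : Continuous fun t : ℝ => ⟪f' x, v⟫ + L * t * ‖v‖ ^ 2).intervalIntegrable 0 1)
    exact hbound
  have hval : (∫ t in (0:ℝ)..1, (⟪f' x, v⟫ + L * t * ‖v‖ ^ 2)) = ⟪f' x, v⟫ + L / 2 * ‖v‖ ^ 2 := by
    have : ∀ t : ℝ, ⟪f' x, v⟫ + L * t * ‖v‖ ^ 2 = ⟪f' x, v⟫ + (L * ‖v‖ ^ 2) * t := by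
      intro t; ring
    simp_rw [this]
    rw [intervalIntegral.integral_add (g := fun t : ℝ => (L * ‖v‖ ^ 2) * t) intervalIntegrable_const
      ((continuous_const.mul continuous_id' : Continuous fun t : ℝ => (L * ‖v‖ ^ 2) * t).intervalIntegrable 0 1),
      intervalIntegral.integral_const, intervalIntegral.integral_const_mul, integral_id]
    norm_num; ring
  linarith [key, hint, hval]

lemma gP_finite {n : ℕ} (g : E n → EReal) (γ : ℝ) (hγ : 0 < γ) (P : E n → E n)
    (hP : IsProx g γ P) (hg : ProperConvexLsc g) (y : E n) :
    g (P y) = (((g (P y)).toReal : ℝ) : EReal) := by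
  obtain ⟨⟨x₀, hx₀⟩, hbot, -, -⟩ := hg
  have hne : g (P y) ≠ ⊤ := by
    intro htop
    have h := hP y x₀
    rw [htop, EReal.top_add_coe] at h
    exact absurd (top_le_iff.mp h)
      (ne_of_lt (EReal.add_lt_top hx₀ (EReal.coe_ne_top _)))
  exact (EReal.coe_toReal hne (hbot _)).symm

/-- Sufficient decrease of the merit function `ψ_γ = (f+g) ∘ prox_{γg}`:
`ψ_γ(xh - γ∇f(xh)) - ψ_γ(x) ≤ -γ(2 - γL_f)/2 ‖R_γ(xh)‖²` with `xh = prox_{γg}(x)`. -/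
theorem psi_sufficient_decrease {n : ℕ} (f : E n → ℝ) (f' : E n → E n) (L : ℝ) (hL : 0 ≤ L)
    (hf : LipSmooth f f' L) (g : E n → EReal) (γ : ℝ) (hγ : 0 < γ)
    (hg : ProperConvexLsc g) (P : E n → E n) (hP : IsProx g γ P) (x : E n)
    (ψ : E n → ℝ) (hψ : ∀ y, ψ y = f (P y) + (g (P y)).toReal)
    (xh : E n) (hxh : xh = P x) :
    ψ (xh - γ • f' xh) - ψ x ≤
      -(γ * (2 - γ * L) / 2) * ‖(1 / γ) • (xh - P (xh - γ • f' xh))‖ ^ 2 := by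
  obtain ⟨hd, hlip⟩ := hf
  have hconv := hg.2.2.2
  subst hxh
  set z : E n := P x - γ • f' (P x) with hz
  set xp : E n := P z with hxp
  set a : ℝ := (g (P x)).toReal with ha
  set b : ℝ := (g xp).toReal with hb
  have hfinx : g (P x) = ((a : ℝ) : EReal) := gP_finite g γ hγ P hP hg x
  have hfinz : g xp = ((b : ℝ) : EReal) := gP_finite g γ hγ P hP hg z
  set v : E n := xp - P x with hv
  set w : E n := f' (P x) with hw
  -- Step 1: key inequality from prox + convexity for t ∈ (0,1]
  have hstep : ∀ t : ℝ, 0 < t → t ≤ 1 →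
      b - a ≤ (1 / γ) * ⟪xp - z, P x - xp⟫ + t * ((1 / (2 * γ)) * ‖P x - xp‖ ^ 2) := by
    intro t ht0 ht1
    set u : E n := (1 - t) • xp + t • P x with hu
    have hgu : g u ≤ (((1 - t) * b + t * a : ℝ) : EReal) := by
      have hc := hconv xp (P x) (1 - t) t (by linarith) ht0.le (by ring)
      rw [hfinz, hfinx] at hc
      calc g u ≤ ((1 - t : ℝ) : EReal) * ((b : ℝ) : EReal) + ((t : ℝ) : EReal) * ((a : ℝ) : EReal) := hc
        _ = (((1 - t) * b + t * a : ℝ) : EReal) := by norm_cast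
    have hprox := hP z u
    rw [← hxp, hfinz] at hprox
    have hE : ((b + (1 / (2 * γ)) * ‖xp - z‖ ^ 2 : ℝ) : EReal) ≤
        (((1 - t) * b + t * a + (1 / (2 * γ)) * ‖u - z‖ ^ 2 : ℝ) : EReal) := by
      push_cast
      have := hprox.trans (add_le_add_left hgu _); push_cast at this; exact this
    have hreal := EReal.coe_le_coe_iff.mp hE
    have hnorm : ‖u - z‖ ^ 2 = ‖xp - z‖ ^ 2 + 2 * (t * ⟪xp - z, P x - xp⟫) + t ^ 2 * ‖P x - xp‖ ^ 2 := by
      have huz : u - z = (xp - z) + t • (P x - xp) := by rw [hu]; module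
      rw [huz, norm_add_sq_real, real_inner_smul_right, norm_smul]
      rw [Real.norm_eq_abs, mul_pow, sq_abs]
    have hc2 : 0 < 1 / (2 * γ) := by positivity
    have h' : t * (b - a) ≤ t * ((1 / γ) * ⟪xp - z, P x - xp⟫ + t * ((1 / (2 * γ)) * ‖P x - xp‖ ^ 2)) := by
      rw [hnorm] at hreal
      have hγ' : γ ≠ 0 := ne_of_gt hγ
      have e1 : t * ((1 / γ) * ⟪xp - z, P x - xp⟫) = (1 / (2 * γ)) * (2 * (t * ⟪xp - z, P x - xp⟫)) := by
        field_simp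
      nlinarith [hreal, e1]
    exact (mul_le_mul_iff_right₀ ht0).mp h'
  -- Step 2: let t → 0⁺
  have hA : b - a ≤ (1 / γ) * ⟪xp - z, P x - xp⟫ := by
    have hcont : Continuous fun t : ℝ =>
        (1 / γ) * ⟪xp - z, P x - xp⟫ + t * ((1 / (2 * γ)) * ‖P x - xp‖ ^ 2) :=
      continuous_const.add (continuous_id.mul continuous_const)
    have htend : Tendsto (fun t : ℝ =>
        (1 / γ) * ⟪xp - z, P x - xp⟫ + t * ((1 / (2 * γ)) * ‖P x - xp‖ ^ 2))
        (nhdsWithin 0 (Set.Ioi 0)) (nhds ((1 / γ) * ⟪xp - z, P x - xp⟫)) := by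
      simpa using (hcont.tendsto 0).mono_left
        (nhdsWithin_le_nhds (s := Set.Ioi (0:ℝ)))
    refine ge_of_tendsto htend ?_
    filter_upwards [Ioc_mem_nhdsGT_of_mem (Set.left_mem_Ico.mpr zero_lt_one)] with t ht
    exact hstep t ht.1 ht.2
  -- Step 3: rewrite the inner product
  have hinner : ⟪xp - z, P x - xp⟫ = -‖v‖ ^ 2 - γ * ⟪w, v⟫ := by
    have h1 : xp - z = v + γ • w := by rw [hv, hz, hw]; module
    have h2 : P x - xp = -v := by rw [hv]; module
    rw [h1, h2, inner_neg_right, inner_add_left, real_inner_smul_left,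
      real_inner_self_eq_norm_sq]
    ring
  -- Step 4: descent lemma
  have hdesc : f xp ≤ f (P x) + ⟪w, v⟫ + L / 2 * ‖v‖ ^ 2 := by
    have := descent_lemma f f' L hL hd hlip (P x) v
    rw [← hw] at this
    have hxpv : P x + v = xp := by rw [hv]; module
    rwa [hxpv] at this
  -- Step 5: combine
  have hψ1 : ψ z = f xp + b := by rw [hψ]
  have hψ2 : ψ x = f (P x) + a := by rw [hψ]
  have hγ' : γ ≠ 0 := ne_of_gt hγ
  have hRHS : -(γ * (2 - γ * L) / 2) * ‖(1 / γ) • (P x - xp)‖ ^ 2 = (L / 2 - 1 / γ) * ‖v‖ ^ 2 := by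
    have h2 : P x - xp = -v := by rw [hv]; module
    rw [h2, norm_smul, norm_neg, Real.norm_eq_abs, abs_of_pos (by positivity : (0:ℝ) < 1 / γ)]
    field_simp
    ring
  rw [hψ1, hψ2, hRHS]
  have hAA : b - a ≤ (1 / γ) * (-‖v‖ ^ 2 - γ * ⟪w, v⟫) := by rw [← hinner]; exact hA
  have hexp : (1 / γ) * (-‖v‖ ^ 2 - γ * ⟪w, v⟫) = -(1 / γ) * ‖v‖ ^ 2 - ⟪w, v⟫ := by
    field_simp
  rw [hexp] at hAA
  nlinarith [hdesc, hAA]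
end
end

section
/- Let F : ℝⁿ → ℝⁿ be strictly (Fréchet) differentiable at z⋆ with F(z⋆) = 0 and invertible Jacobian JF(z⋆). Let (zᵏ) and directions (dᵏ) be sequences with zᵏ → z⋆, dᵏ ≠ 0, dᵏ → 0, and satisfying the Dennis–Moré condition lim_{k→∞} ‖F(zᵏ) + JF(z⋆)dᵏ‖/‖dᵏ‖ = 0. Then lim_{k→∞} ‖zᵏ + dᵏ - z⋆‖/‖zᵏ - z⋆‖ = 0, i.e., the steps zᵏ + dᵏ converge superlinearly to z⋆. -/
open scoped RealInnerProductSpace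
open Filter

noncomputable section

/-- Dennis–Moré: superlinear step convergence from strict differentiability, invertible
Jacobian, and the Dennis–Moré condition. -/
theorem dennis_more_superlinear {n : ℕ} (F : E n → E n) (zs : E n)
    (J : E n ≃L[ℝ] E n) (hF : HasStrictFDerivAt F (J : E n →L[ℝ] E n) zs)
    (hFz : F zs = 0) (z d : ℕ → E n)
    (hz : Tendsto z atTop (nhds zs)) (hd0 : ∀ k, d k ≠ 0) (hd : Tendsto d atTop (nhds 0))
    (hDM : Tendsto (fun k => ‖F (z k) + J (d k)‖ / ‖d k‖) atTop (nhds 0)) :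
    Tendsto (fun k => ‖z k + d k - zs‖ / ‖z k - zs‖) atTop (nhds 0) := by
  set C : ℝ := ‖(J.symm : E n →L[ℝ] E n)‖ + 1 with hCdef
  have hC0 : (0:ℝ) < C := by positivity
  rw [NormedAddCommGroup.tendsto_nhds_zero] at hDM ⊢
  intro ε hε
  set η : ℝ := min (1/(2*C)) (ε/(8*C)) with hηdef
  have hη : 0 < η := by
    apply lt_min <;> positivity
  have hη1 : η ≤ 1/(2*C) := min_le_left _ _
  have hη2 : η ≤ ε/(8*C) := min_le_right _ _
  have h1 : ∀ᶠ k in atTop, ‖F (z k) - J (z k - zs)‖ ≤ η * ‖z k - zs‖ := by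
    have := (hF.hasFDerivAt.isLittleO.comp_tendsto hz).def hη
    simpa [hFz] using this
  have h2 : ∀ᶠ k in atTop, ‖F (z k) + J (d k)‖ ≤ η * ‖d k‖ := by
    filter_upwards [hDM η hη] with k hk
    have hdk : 0 < ‖d k‖ := norm_pos_iff.mpr (hd0 k)
    rw [Real.norm_eq_abs, abs_of_nonneg (by positivity)] at hk
    rw [div_lt_iff₀ hdk] at hk
    exact hk.le
  filter_upwards [h1, h2] with k h1k h2k
  have hJ : J (z k + d k - zs) = (F (z k) + J (d k)) - (F (z k) - J (z k - zs)) := by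
    have hzd : z k + d k - zs = (z k - zs) + d k := by abel
    rw [hzd, map_add]
    abel
  have hnormJ : ‖J (z k + d k - zs)‖ ≤ η * ‖d k‖ + η * ‖z k - zs‖ := by
    rw [hJ]
    exact (norm_sub_le _ _).trans (add_le_add h2k h1k)
  have hinv : ‖z k + d k - zs‖ ≤ C * ‖J (z k + d k - zs)‖ := by
    calc ‖z k + d k - zs‖ = ‖(J.symm : E n →L[ℝ] E n) (J (z k + d k - zs))‖ := by
          simp
      _ ≤ ‖(J.symm : E n →L[ℝ] E n)‖ * ‖J (z k + d k - zs)‖ :=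
          (J.symm : E n →L[ℝ] E n).le_opNorm _
      _ ≤ C * ‖J (z k + d k - zs)‖ := by
          apply mul_le_mul_of_nonneg_right _ (norm_nonneg _)
          rw [hCdef]
          exact le_add_of_nonneg_right zero_le_one
  have hdb : ‖d k‖ ≤ ‖z k + d k - zs‖ + ‖z k - zs‖ := by
    calc ‖d k‖ = ‖(z k + d k - zs) - (z k - zs)‖ := by congr 1; abel
      _ ≤ ‖z k + d k - zs‖ + ‖z k - zs‖ := norm_sub_le _ _
  have hCη : C * η ≤ 1/2 := by
    have := mul_le_mul_of_nonneg_left hη1 hC0.le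
    calc C * η ≤ C * (1/(2*C)) := this
      _ = 1/2 := by field_simp
  have hCη2 : C * η ≤ ε/8 := by
    have := mul_le_mul_of_nonneg_left hη2 hC0.le
    calc C * η ≤ C * (ε/(8*C)) := this
      _ = ε/8 := by field_simp
  have key : ‖z k + d k - zs‖ ≤ (ε/2) * ‖z k - zs‖ := by
    nlinarith [norm_nonneg (z k + d k - zs), norm_nonneg (z k - zs), norm_nonneg (d k),
      norm_nonneg (J (z k + d k - zs)), hη.le,
      mul_le_mul_of_nonneg_left hnormJ hC0.le,
      mul_le_mul_of_nonneg_left hdb (by positivity : (0:ℝ) ≤ C*η),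
      mul_le_mul_of_nonneg_right hCη (norm_nonneg (z k + d k - zs)),
      mul_le_mul_of_nonneg_right hCη2 (norm_nonneg (z k - zs))]
  by_cases hb : ‖z k - zs‖ = 0
  · simp [hb, hε]
  · have hb' : 0 < ‖z k - zs‖ := lt_of_le_of_ne (norm_nonneg _) (Ne.symm hb)
    rw [Real.norm_eq_abs, abs_of_nonneg (by positivity), div_lt_iff₀ hb']
    nlinarith
end
end

section
/- Let f be L_f-Lipschitz smooth, g proper lsc convex, γ > 0, φ = f + g, ψ_γ = φ ∘ prox_{γg}. Suppose x⋆ = prox_{γg}(x⋆ - γ∇f(x⋆)) is a strong local minimizer: there exists μ > 0 with φ(x) - φ(x⋆) ≥ (μ/2)‖x - x⋆‖² for x near x⋆. Then for x near x⋆ (so that the strong minimality bound applies at x̂ = prox_{γg}(x)), with z⋆ = x⋆ - γ∇f(x⋆): (ψ_γ(z) - φ(x⋆))/(ψ_γ(x) - φ(x⋆)) ≤ ((1 + γL_f)/(γμ)) · ‖z - z⋆‖²/‖x̂ - x⋆‖² for any z ∈ ℝⁿ, whenever ψ_γ(x) > φ(x⋆). -/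
open scoped RealInnerProductSpace
open Filter

set_option maxHeartbeats 1000000

noncomputable section

lemma descent {n : ℕ} {f : E n → ℝ} {f' : E n → E n} {L : ℝ} (hL : 0 ≤ L)
    (hf : LipSmooth f f' L) (x y : E n) :
    f y ≤ f x + ⟪f' x, y - x⟫ + L / 2 * ‖y - x‖ ^ 2 := by
  set u := y - x with hu
  set c : ℝ := ⟪f' x, u⟫ with hc
  set q : ℝ := L / 2 * ‖u‖ ^ 2 with hq
  set G : ℝ → ℝ := fun t => f (x + t • u) - t * c - q * t ^ 2 with hG
  have key : ∀ t : ℝ, HasDerivAt (fun s : ℝ => f (x + s • u)) ⟪f' (x + t • u), u⟫ t := by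
    intro t
    have h1 : HasDerivAt (fun s : ℝ => x + s • u) u t := by
      simpa using ((hasDerivAt_id t).smul_const u).const_add x
    have h2 := (hf.1 (x + t • u)).hasFDerivAt
    have h3 := h2.comp_hasDerivAt t h1
    simpa [InnerProductSpace.toDual_apply_apply, Function.comp_def] using h3
  have keyG : ∀ t : ℝ, HasDerivAt G (⟪f' (x + t • u), u⟫ - c - q * (2 * t)) t := by
    intro t
    have := ((key t).sub (hasDerivAt_mul_const c)).sub
      ((hasDerivAt_pow 2 t).const_mul q)
    simpa [hG, mul_comm, Pi.sub_def] using this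
  have hanti : AntitoneOn G (Set.Icc (0:ℝ) 1) := by
    apply antitoneOn_of_deriv_nonpos (convex_Icc 0 1)
    · exact fun t _ => (keyG t).differentiableAt.continuousAt.continuousWithinAt
    · exact fun t _ => (keyG t).differentiableAt.differentiableWithinAt
    · intro t ht
      rw [interior_Icc] at ht
      rw [(keyG t).deriv]
      have hlip : ‖f' (x + t • u) - f' x‖ ≤ L * (t * ‖u‖) := by
        have := hf.2.dist_le_mul (x + t • u) x
        rw [dist_eq_norm, dist_eq_norm] at this
        simp only [add_sub_cancel_left] at this
        calc ‖f' (x + t • u) - f' x‖ ≤ L.toNNReal * ‖t • u‖ := this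
        _ = L * (|t| * ‖u‖) := by rw [norm_smul, Real.coe_toNNReal L hL]; simp
        _ = L * (t * ‖u‖) := by rw [abs_of_pos ht.1]
      have hcs : ⟪f' (x + t • u) - f' x, u⟫ ≤ ‖f' (x + t • u) - f' x‖ * ‖u‖ :=
        real_inner_le_norm _ _
      have h2 : ⟪f' (x + t • u), u⟫ - c ≤ L * t * ‖u‖ ^ 2 := by
        rw [hc, ← inner_sub_left]
        calc ⟪f' (x + t • u) - f' x, u⟫ ≤ ‖f' (x + t • u) - f' x‖ * ‖u‖ := hcs
        _ ≤ L * (t * ‖u‖) * ‖u‖ := by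
            apply mul_le_mul_of_nonneg_right hlip (norm_nonneg _)
        _ = L * t * ‖u‖ ^ 2 := by ring
      have : q * (2 * t) = L * t * ‖u‖ ^ 2 := by rw [hq]; ring
      linarith [h2, this.ge]
  have h01 := hanti (Set.left_mem_Icc.2 zero_le_one) (Set.right_mem_Icc.2 zero_le_one)
    zero_le_one
  have e1 : G 1 = f y - c - q := by simp [hG, hu]
  have e0 : G 0 = f x := by simp [hG]
  rw [e1, e0] at h01
  rw [hc, hq] at h01
  linarith

lemma le_of_small_t {A B C : ℝ} (hC : 0 ≤ C)
    (h : ∀ t : ℝ, 0 < t → t ≤ 1 → A ≤ B + t * C) : A ≤ B := by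
  rcases eq_or_lt_of_le hC with hC0 | hC0
  · simpa [← hC0] using h 1 one_pos le_rfl
  · by_contra hAB
    push_neg at hAB
    have hABp : 0 < A - B := by linarith
    have ht1 : (0:ℝ) < min 1 ((A - B) / (2 * C)) :=
      lt_min one_pos (by positivity)
    have ht2 : min 1 ((A - B) / (2 * C)) ≤ 1 := min_le_left _ _
    have := h _ ht1 ht2
    have h3 : min 1 ((A - B) / (2 * C)) * C ≤ ((A - B) / (2 * C)) * C :=
      mul_le_mul_of_nonneg_right (min_le_right _ _) hC
    have h4 : ((A - B) / (2 * C)) * C = (A - B) / 2 := by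
      field_simp
    linarith


lemma gP_ne_top {n : ℕ} {g : E n → EReal} {γ : ℝ} (hγ : 0 < γ)
    (hg : ProperConvexLsc g) {P : E n → E n} (hP : IsProx g γ P) (w : E n) :
    g (P w) ≠ ⊤ := by
  obtain ⟨u₀, hu₀⟩ := hg.1
  intro htop
  have := hP w u₀
  rw [htop] at this
  have hbot : g u₀ ≠ ⊥ := hg.2.1 u₀
  have hrhs : g u₀ + (((1 / (2 * γ)) * ‖u₀ - w‖ ^ 2 : ℝ) : EReal) < ⊤ := by
    exact EReal.add_lt_top hu₀ (EReal.coe_ne_top _)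

  have hlhs : (⊤ : EReal) + (((1 / (2 * γ)) * ‖P w - w‖ ^ 2 : ℝ) : EReal) = ⊤ := by
    rw [EReal.top_add_of_ne_bot (EReal.coe_ne_bot _)]
  rw [hlhs] at this
  exact absurd (top_le_iff.1 this) (ne_of_lt hrhs)


lemma prox_subgrad {n : ℕ} {g : E n → EReal} {γ : ℝ} (hγ : 0 < γ)
    (hg : ProperConvexLsc g) {P : E n → E n} (hP : IsProx g γ P) (w u : E n)
    (hu : g u ≠ ⊤) :
    (g (P w)).toReal ≤ (g u).toReal + (1 / γ) * ⟪P w - w, u - P w⟫ := by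
  set p := P w with hp
  have hpt : g p ≠ ⊤ := gP_ne_top hγ hg hP w
  have hpb : g p ≠ ⊥ := hg.2.1 p
  have hub : g u ≠ ⊥ := hg.2.1 u
  set Gp : ℝ := (g p).toReal with hGp
  set Gu : ℝ := (g u).toReal with hGu
  have hgp : g p = (Gp : EReal) := (EReal.coe_toReal hpt hpb).symm
  have hgu : g u = (Gu : EReal) := (EReal.coe_toReal hu hub).symm
  set c : ℝ := 1 / (2 * γ) with hcdef
  have hcpos : 0 < c := by rw [hcdef]; positivity
  apply le_of_small_t (C := c * ‖u - p‖ ^ 2) (by positivity)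
  intro t ht ht1
  have hconv := hg.2.2.2 p u (1 - t) t (by linarith) (le_of_lt ht) (by ring)
  have hprox := hP w ((1 - t) • p + t • u)
  rw [← hp] at hprox
  have hchain : g p + ((c * ‖p - w‖ ^ 2 : ℝ) : EReal)
      ≤ ((1 - t) : ℝ) * g p + (t : ℝ) * g u + ((c * ‖(1 - t) • p + t • u - w‖ ^ 2 : ℝ) : EReal) :=
    le_trans hprox (add_le_add hconv le_rfl)
  rw [hgp, hgu] at hchain
  have hcoe1 : ((1 - t : ℝ) : EReal) * ((Gp : ℝ) : EReal) = (((1 - t) * Gp : ℝ) : EReal) := by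
    rw [← EReal.coe_mul]
  have hcoe2 : ((t : ℝ) : EReal) * ((Gu : ℝ) : EReal) = ((t * Gu : ℝ) : EReal) := by
    rw [← EReal.coe_mul]
  rw [hcoe1, hcoe2, ← EReal.coe_add, ← EReal.coe_add, ← EReal.coe_add,
    EReal.coe_le_coe_iff] at hchain
  have hvec : ((1 - t) • p + t • u) - w = (p - w) + t • (u - p) := by module
  rw [hvec, norm_add_sq_real, real_inner_smul_right, norm_smul] at hchain
  rw [Real.norm_eq_abs, abs_of_pos ht, mul_pow] at hchain
  have h2c : 2 * c = 1 / γ := by rw [hcdef]; field_simp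
  have h5 : t * (Gp - Gu) ≤ t * (2 * c * ⟪p - w, u - p⟫ + c * t * ‖u - p‖ ^ 2) := by
    nlinarith [hchain]
  have h6 : Gp - Gu ≤ 2 * c * ⟪p - w, u - p⟫ + c * t * ‖u - p‖ ^ 2 :=
    le_of_mul_le_mul_left h5 ht
  rw [h2c] at h6
  linarith [h6]

/-- Ratio bound near a strong local minimizer:
`(ψ_γ(z) - φ(x⋆))/(ψ_γ(x) - φ(x⋆)) ≤ ((1+γL_f)/(γμ)) ‖z - z⋆‖²/‖x̂ - x⋆‖²`. -/
theorem psi_ratio_bound {n : ℕ} (f : E n → ℝ) (f' : E n → E n) (L : ℝ) (hL : 0 ≤ L)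
    (hf : LipSmooth f f' L) (g : E n → EReal) (γ : ℝ) (hγ : 0 < γ)
    (hg : ProperConvexLsc g) (P : E n → E n) (hP : IsProx g γ P)
    (ψ : E n → ℝ) (hψ : ∀ y, ψ y = f (P y) + (g (P y)).toReal)
    (xs zs : E n) (hfix : xs = P (xs - γ • f' xs)) (hzs : zs = xs - γ • f' xs)
    (μ δ : ℝ) (hμ : 0 < μ) (hδ : 0 < δ)
    (hmin : ∀ y : E n, ‖y - xs‖ < δ →
      (((f xs + (g xs).toReal) + μ / 2 * ‖y - xs‖ ^ 2 : ℝ) : EReal) ≤ (f y : EReal) + g y)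
    (x : E n) (xh : E n) (hxh : xh = P x) (hnear : ‖xh - xs‖ < δ)
    (hpos : f xs + (g xs).toReal < ψ x) (z : E n) :
    (ψ z - (f xs + (g xs).toReal)) / (ψ x - (f xs + (g xs).toReal)) ≤
      ((1 + γ * L) / (γ * μ)) * (‖z - zs‖ ^ 2 / ‖xh - xs‖ ^ 2) := by
  have hPzs : P zs = xs := by rw [hzs]; exact hfix.symm
  set Φ : ℝ := f xs + (g xs).toReal with hΦ
  set p : E n := P z with hpdef
  set v : E n := f' xs with hv
  set a : E n := p - xs with ha
  set b : E n := z - zs with hb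
  -- basic finiteness
  have hgxs_top : g xs ≠ ⊤ := by rw [← hPzs]; exact gP_ne_top hγ hg hP zs
  have hgxh_top : g xh ≠ ⊤ := by rw [hxh]; exact gP_ne_top hγ hg hP x
  have hgxh_bot : g xh ≠ ⊥ := hg.2.1 xh
  -- subgradient inequalities
  have hsub1 : (g p).toReal ≤ (g xs).toReal + (1 / γ) * ⟪p - z, xs - p⟫ :=
    prox_subgrad hγ hg hP z xs hgxs_top
  have hsub2 : (g xs).toReal ≤ (g p).toReal + (1 / γ) * ⟪xs - zs, p - xs⟫ := by
    have hptop : g p ≠ ⊤ := gP_ne_top hγ hg hP z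
    have := prox_subgrad hγ hg hP zs p hptop
    rwa [hPzs] at this
  -- vector identities
  have hxszs : xs - zs = γ • v := by rw [hzs, hv]; abel
  have hpz : p - z = γ • v + a - b := by
    rw [ha, hb, hxszs.symm]; abel
  have hxsp : xs - p = -a := by rw [ha]; abel
  -- inner product expansions
  have e1 : ⟪p - z, xs - p⟫ = -(γ * ⟪v, a⟫) - ‖a‖ ^ 2 + ⟪a, b⟫ := by
    rw [hpz, hxsp]
    simp only [inner_add_left, inner_sub_left, inner_neg_right, real_inner_smul_left,
      real_inner_self_eq_norm_sq, real_inner_comm b a]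
    ring
  have e2 : ⟪xs - zs, p - xs⟫ = γ * ⟪v, a⟫ := by
    rw [hxszs, ← ha, real_inner_smul_left]
  -- monotonicity ⇒ ‖a‖² ≤ ⟪a,b⟫ ⇒ ‖a‖ ≤ ‖b‖
  have hmono : ‖a‖ ^ 2 ≤ ⟪a, b⟫ := by
    have h0 : 0 ≤ (1 / γ) * ⟪p - z, xs - p⟫ + (1 / γ) * ⟪xs - zs, p - xs⟫ := by
      linarith [hsub1, hsub2]
    rw [e1, e2] at h0
    have hre : (1 / γ) * (-(γ * ⟪v, a⟫) - ‖a‖ ^ 2 + ⟪a, b⟫) + (1 / γ) * (γ * ⟪v, a⟫)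
        = (1 / γ) * (⟪a, b⟫ - ‖a‖ ^ 2) := by ring
    rw [hre] at h0
    have hγ' : (0:ℝ) < 1 / γ := by positivity
    nlinarith [h0, hγ']
  have hab : ‖a‖ ≤ ‖b‖ := by
    nlinarith [real_inner_le_norm a b, hmono, norm_nonneg a, norm_nonneg b]
  -- upper bound: ψ z - Φ ≤ (1+γL)/(2γ) ‖b‖²
  have hdes : f p ≤ f xs + ⟪v, a⟫ + L / 2 * ‖a‖ ^ 2 := by
    have := descent hL hf xs p
    rwa [← ha, ← hv] at this
  have hupper : ψ z - Φ ≤ (1 + γ * L) / (2 * γ) * ‖b‖ ^ 2 := by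
    have hψz : ψ z = f p + (g p).toReal := hψ z
    have h1 : ψ z - Φ ≤ ⟪v, a⟫ + L / 2 * ‖a‖ ^ 2 + (1 / γ) * ⟪p - z, xs - p⟫ := by
      rw [hψz, hΦ]; linarith [hdes, hsub1]
    rw [e1] at h1
    have hγinv : (1 / γ) * (γ * ⟪v, a⟫) = ⟪v, a⟫ := by field_simp
    have h2 : ψ z - Φ ≤ L / 2 * ‖a‖ ^ 2 - (1 / γ) * ‖a‖ ^ 2 + (1 / γ) * ⟪a, b⟫ := by
      have : (1 / γ) * (-(γ * ⟪v, a⟫) - ‖a‖ ^ 2 + ⟪a, b⟫)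
          = -⟪v, a⟫ - (1 / γ) * ‖a‖ ^ 2 + (1 / γ) * ⟪a, b⟫ := by
        field_simp
      linarith [h1, this.le, this.ge]
    have hcs : ⟪a, b⟫ ≤ ‖a‖ * ‖b‖ := real_inner_le_norm a b
    rw [div_mul_eq_mul_div, le_div_iff₀ (by positivity : (0:ℝ) < 2 * γ)]
    have hsq : ‖a‖ ^ 2 ≤ ‖b‖ ^ 2 := pow_le_pow_left₀ (norm_nonneg a) hab 2
    have key : (γ * L - 2) * ‖a‖ ^ 2 + 2 * ⟪a, b⟫ ≤ (1 + γ * L) * ‖b‖ ^ 2 := by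
      nlinarith [hcs, hsq, sq_nonneg (‖b‖ - ‖a‖), sq_nonneg ‖a‖,
        mul_nonneg (mul_nonneg hγ.le hL) (sub_nonneg.2 hsq)]
    have h3 : (ψ z - Φ) * (2 * γ) ≤ (γ * L - 2) * ‖a‖ ^ 2 + 2 * ⟪a, b⟫ := by
      have h2' := mul_le_mul_of_nonneg_right h2 (by positivity : (0:ℝ) ≤ 2 * γ)
      calc (ψ z - Φ) * (2 * γ)
          ≤ (L / 2 * ‖a‖ ^ 2 - 1 / γ * ‖a‖ ^ 2 + 1 / γ * ⟪a, b⟫) * (2 * γ) := h2'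
        _ = (γ * L - 2) * ‖a‖ ^ 2 + 2 * ⟪a, b⟫ := by field_simp
    linarith [h3, key]
  -- lower bound: Φ + μ/2 r₀² ≤ ψ x
  have hlower : Φ + μ / 2 * ‖xh - xs‖ ^ 2 ≤ ψ x := by
    have h := hmin xh hnear
    rw [(EReal.coe_toReal hgxh_top hgxh_bot).symm, ← EReal.coe_add,
      EReal.coe_le_coe_iff] at h
    rw [hψ x, ← hxh]
    exact h
  -- r₀ > 0
  have hr0 : 0 < ‖xh - xs‖ := by
    rw [norm_sub_pos_iff]
    intro hxx
    have : ψ x = Φ := by rw [hψ x, ← hxh, hxx, hΦ]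
    rw [this] at hpos; exact lt_irrefl _ hpos
  -- conclude
  have hD : 0 < ψ x - Φ := by rw [hΦ]; linarith [hpos]
  rcases le_or_gt (ψ z - Φ) 0 with hA | hA
  · have hLHS : (ψ z - Φ) / (ψ x - Φ) ≤ 0 := div_nonpos_iff.2 (Or.inr ⟨hA, hD.le⟩)
    have hRHS : 0 ≤ (1 + γ * L) / (γ * μ) * (‖z - zs‖ ^ 2 / ‖xh - xs‖ ^ 2) := by
      apply mul_nonneg
      · apply div_nonneg (by nlinarith) (by positivity)
      · positivity
    calc (ψ z - Φ) / (ψ x - Φ) ≤ 0 := hLHS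
      _ ≤ _ := hRHS
  · rw [div_le_iff₀ hD]
    have hfac : 0 ≤ (1 + γ * L) / (γ * μ) * (‖z - zs‖ ^ 2 / ‖xh - xs‖ ^ 2) := by
      apply mul_nonneg
      · apply div_nonneg (by nlinarith) (by positivity)
      · positivity
    have hid : (1 + γ * L) / (2 * γ) * ‖b‖ ^ 2
        = ((1 + γ * L) / (γ * μ) * (‖b‖ ^ 2 / ‖xh - xs‖ ^ 2)) * (μ / 2 * ‖xh - xs‖ ^ 2) := by
      field_simp
    calc ψ z - Φ ≤ (1 + γ * L) / (2 * γ) * ‖b‖ ^ 2 := hupper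
      _ = ((1 + γ * L) / (γ * μ) * (‖b‖ ^ 2 / ‖xh - xs‖ ^ 2)) * (μ / 2 * ‖xh - xs‖ ^ 2) := hid
      _ ≤ ((1 + γ * L) / (γ * μ) * (‖b‖ ^ 2 / ‖xh - xs‖ ^ 2)) * (ψ x - Φ) := by
          apply mul_le_mul_of_nonneg_left _ (by rw [← hb] at hfac; exact hfac)
          linarith [hlower]
end
end
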